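/- On the trivial thread T_0 there are exactly three prestar labellings with exponent w_2, namely ρ_20, ρ_02 and ρ_11. For every m ≥ 1, ρ_20 and ρ_02 are the only 1-footed prestar labellings of T_m having exponent w_2. -/

import Mathlib

namespace FLL

/-- Flags of the thread `T_m` (obtained from the path `v_0 e_0 v_1 e_1 ⋯ e_m v_{m+1}`
by adding feet `f_{k+1} = v_{k+1} w_{k+1}` for `k = 0, …, m-1`):
* `vLeft k`  is the flag `(v_k, e_k)` for `0 ≤ k ≤ m`;
* `vRight k` is the flag `(v_{k+1}, e_k)` for `0 ≤ k ≤ m`;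
* `vFoot k`  is the flag `(v_{k+1}, f_{k+1})` for `0 ≤ k ≤ m-1`;
* `wFoot k`  is the flag `(w_{k+1}, f_{k+1})` for `0 ≤ k ≤ m-1`. -/
inductive ThreadFlag (m : ℕ) where
  | vLeft (k : Fin (m+1))
  | vRight (k : Fin (m+1))
  | vFoot (k : Fin m)
  | wFoot (k : Fin m)
deriving DecidableEq

/-- Edges of the thread `T_m`: `e k` is the path edge `e_k` (`0 ≤ k ≤ m`),
`f k` is the foot edge `f_{k+1}` (`0 ≤ k ≤ m-1`). -/
inductive ThreadEdge (m : ℕ) where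
  | e (k : Fin (m+1))
  | f (k : Fin m)
deriving DecidableEq

namespace Thread

variable {m : ℕ}

/-- A prestar labelling of `T_m`: a function from the flags to `{0,1,2}` whose
restriction to the three flags at the internal vertex `v_{k+1}` (`0 ≤ k ≤ m-1`)
is a bijection onto `{0,1,2}`. -/
def IsPrestar (π : ThreadFlag m → Fin 3) : Prop :=
  ∀ k : Fin m,
    π (.vRight k.castSucc) ≠ π (.vLeft k.succ) ∧
    π (.vRight k.castSucc) ≠ π (.vFoot k) ∧
    π (.vLeft k.succ) ≠ π (.vFoot k)

/-- The exponent of a prestar labelling: `w(e) = π(ue) + π(ve)` for each edge `e = uv`. -/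
def texp (π : ThreadFlag m → Fin 3) : ThreadEdge m → ℕ
  | .e k => (π (.vLeft k) : ℕ) + (π (.vRight k) : ℕ)
  | .f k => (π (.vFoot k) : ℕ) + (π (.wFoot k) : ℕ)

/-- A prestar labelling is 1-footed if every foot flag `w_k f_k` is labelled `1`. -/
def OneFooted (π : ThreadFlag m → Fin 3) : Prop := ∀ k : Fin m, π (.wFoot k) = 1

/-- The constant weighting `w_𝟐 ≡ 2`. -/
def w2 : ThreadEdge m → ℕ := fun _ => 2

/-- The weighting `w_11` (for `m ≥ 1`): as `w_𝟐` except `w(e_0) = 1`, `w(e_m) = 3`. -/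
def w11 : ThreadEdge m → ℕ
  | .e k => if (k : ℕ) = 0 then 1 else if (k : ℕ) = m then 3 else 2
  | .f _ => 2

/-- The weighting `w_02` (for `m ≥ 1`): as `w_𝟐` except `w(e_0) = 1`, `w(f_1) = 3`. -/
def w02 : ThreadEdge m → ℕ
  | .e k => if (k : ℕ) = 0 then 1 else 2
  | .f k => if (k : ℕ) = 0 then 3 else 2

/-- The weighting `w_20` (for `m ≥ 1`): as `w_𝟐` except `w(e_0) = 3`, `w(e_1) = 0`,
`w(f_1) = 3`. -/
def w20 : ThreadEdge m → ℕ
  | .e k => if (k : ℕ) = 0 then 3 else if (k : ℕ) = 1 then 0 else 2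
  | .f k => if (k : ℕ) = 0 then 3 else 2

/-- The 1-footed prestar labelling `ρ_02`. -/
def rho02 : ThreadFlag m → Fin 3
  | .vLeft _ => 0
  | .vRight _ => 2
  | .vFoot _ => 1
  | .wFoot _ => 1

/-- The 1-footed prestar labelling `ρ_20`. -/
def rho20 : ThreadFlag m → Fin 3
  | .vLeft _ => 2
  | .vRight _ => 0
  | .vFoot _ => 1
  | .wFoot _ => 1

/-- The prestar labelling `ρ_11` of the trivial thread `T_0` (both flags labelled 1). -/
def rho11 : ThreadFlag m → Fin 3 := fun _ => 1

/-- The 1-footed prestar labelling `π_11` (for `m ≥ 1`). -/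
def pi11 : ThreadFlag m → Fin 3
  | .vLeft k => if (k : ℕ) = 0 then 1 else 2
  | .vRight k => if (k : ℕ) = m then 1 else 0
  | .vFoot _ => 1
  | .wFoot _ => 1

/-- The 1-footed prestar labelling `π_02` (for `m ≥ 1`). -/
def pi02 : ThreadFlag m → Fin 3
  | .vLeft _ => 0
  | .vRight k => if (k : ℕ) = 0 then 1 else 2
  | .vFoot k => if (k : ℕ) = 0 then 2 else 1
  | .wFoot _ => 1

/-- The 1-footed prestar labelling `π_20` (for `m ≥ 1`). -/
def pi20 : ThreadFlag m → Fin 3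
  | .vLeft k => if (k : ℕ) = 1 then 0 else 2
  | .vRight k => if (k : ℕ) = 0 then 1 else 0
  | .vFoot k => if (k : ℕ) = 0 then 2 else 1
  | .wFoot _ => 1

/-- The exceptional 1-footed prestar labelling `π′_11` of `T_1`. -/
def pi'11 : ThreadFlag m → Fin 3
  | .vLeft _ => 1
  | .vRight k => if (k : ℕ) = 0 then 0 else 1
  | .vFoot _ => 2
  | .wFoot _ => 1

/-- Sign contribution of one pair of (edge, label) data, relative to an edge ordering. -/
def psign (ord : ThreadEdge m → ℕ) (a b : ThreadEdge m) (x y : Fin 3) : ℤ :=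
  if ord a < ord b then ((y : ℤ) - (x : ℤ)).sign else ((x : ℤ) - (y : ℤ)).sign

/-- The sign of the star labelling at the internal vertex `v_{k+1}`: the sign of the
permutation of `{0,1,2}` given by the labels of the three flags at `v_{k+1}` taken in
increasing edge order (computed as a product over the three pairs of flags). -/
def vsgn (ord : ThreadEdge m → ℕ) (π : ThreadFlag m → Fin 3) (k : Fin m) : ℤ :=
  psign ord (.e k.castSucc) (.e k.succ) (π (.vRight k.castSucc)) (π (.vLeft k.succ)) *
  psign ord (.e k.castSucc) (.f k) (π (.vRight k.castSucc)) (π (.vFoot k)) *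
  psign ord (.e k.succ) (.f k) (π (.vLeft k.succ)) (π (.vFoot k))

/-- The sign of a prestar labelling of `T_m`: `sgn(π) = ∏_{k=1}^m sgn(π_{v_k})`. -/
def psgn (ord : ThreadEdge m → ℕ) (π : ThreadFlag m → Fin 3) : ℤ :=
  ∏ k : Fin m, vsgn ord π k

end Thread
end FLL


private lemma fin3cases : ∀ a : Fin 3, a = 0 ∨ a = 1 ∨ a = 2 := by decide

private lemma fin3val : ∀ a : Fin 3, (a = 0 ↔ (a:ℕ) = 0) ∧ (a = 1 ↔ (a:ℕ) = 1) ∧ (a = 2 ↔ (a:ℕ) = 2) := by decide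

open FLL FLL.Thread

/-- part of Lemma 3.1.  There are exactly three prestar labellings of
the trivial thread `T_0` with exponent `w_𝟐`, namely `ρ_20`, `ρ_02`, `ρ_11`; and for every
`m ≥ 1`, `ρ_20` and `ρ_02` are the only 1-footed prestar labellings of `T_m` with
exponent `w_𝟐`. -/
theorem statement4 :
    (∀ π : ThreadFlag 0 → Fin 3,
      (IsPrestar π ∧ texp π = w2) ↔ (π = rho20 ∨ π = rho02 ∨ π = rho11)) ∧
    (∀ m : ℕ, 1 ≤ m → ∀ π : ThreadFlag m → Fin 3,
      (IsPrestar π ∧ OneFooted π ∧ texp π = w2) ↔ (π = rho20 ∨ π = rho02)) := by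
  constructor
  · -- the m = 0 case
    intro π
    constructor
    · rintro ⟨-, he⟩
      have hedge : (π (.vLeft 0) : ℕ) + (π (.vRight 0) : ℕ) = 2 := congrFun he (.e 0)
      have key : (π (.vLeft 0) = 2 ∧ π (.vRight 0) = 0) ∨
          (π (.vLeft 0) = 0 ∧ π (.vRight 0) = 2) ∨
          (π (.vLeft 0) = 1 ∧ π (.vRight 0) = 1) := by
        rcases fin3cases (π (.vLeft 0)) with h | h | h <;>
          rcases fin3cases (π (.vRight 0)) with h' | h' | h' <;>
          simp_all [(fin3val _).1, (fin3val _).2.1, (fin3val _).2.2, -Fin.val_eq_zero_iff]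
      rcases key with ⟨h1, h2⟩ | ⟨h1, h2⟩ | ⟨h1, h2⟩
      · left
        funext f
        cases f with
        | vLeft k => rw [Fin.fin_one_eq_zero k]; exact h1
        | vRight k => rw [Fin.fin_one_eq_zero k]; exact h2
        | vFoot k => exact k.elim0
        | wFoot k => exact k.elim0
      · right; left
        funext f
        cases f with
        | vLeft k => rw [Fin.fin_one_eq_zero k]; exact h1
        | vRight k => rw [Fin.fin_one_eq_zero k]; exact h2
        | vFoot k => exact k.elim0
        | wFoot k => exact k.elim0
      · right; right
        funext f
        cases f with
        | vLeft k => rw [Fin.fin_one_eq_zero k]; exact h1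
        | vRight k => rw [Fin.fin_one_eq_zero k]; exact h2
        | vFoot k => exact k.elim0
        | wFoot k => exact k.elim0
    · rintro (rfl | rfl | rfl) <;>
        refine ⟨fun k => k.elim0, funext fun e => ?_⟩ <;>
        cases e with
        | e k => rfl
        | f k => exact k.elim0
  · -- the m ≥ 1 case
    intro m hm π
    constructor
    · rintro ⟨hp, hf, he⟩
      have hedge : ∀ k : Fin (m+1), (π (.vLeft k) : ℕ) + (π (.vRight k) : ℕ) = 2 :=
        fun k => congrFun he (.e k)
      have hfoot : ∀ k : Fin m, π (.vFoot k) = 1 := by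
        intro k
        have h1 : (π (.vFoot k) : ℕ) + (π (.wFoot k) : ℕ) = 2 := congrFun he (.f k)
        rw [hf k] at h1
        rcases fin3cases (π (.vFoot k)) with h | h | h <;>
          simp_all [(fin3val _).1, (fin3val _).2.1, (fin3val _).2.2]
      have hv : ∀ k : Fin m, π (.vRight k.castSucc) ≠ π (.vLeft k.succ) ∧
          π (.vRight k.castSucc) ≠ 1 ∧ π (.vLeft k.succ) ≠ 1 := by
        intro k
        obtain ⟨h1, h2, h3⟩ := hp k
        rw [hfoot k] at h2 h3
        exact ⟨h1, h2, h3⟩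
      have k0 : Fin m := ⟨0, hm⟩
      have ha0 : π (.vRight (⟨0, Nat.succ_pos m⟩ : Fin (m+1))) ≠ 1 := (hv ⟨0, hm⟩).2.1
      -- the main propagation claim, parametrized by the value a ∈ {0, 2}
      have claim : ∀ a : Fin 3, π (.vRight (⟨0, Nat.succ_pos m⟩ : Fin (m+1))) = a →
          ((a:ℕ) = 0 ∨ (a:ℕ) = 2) →
          ∀ k : ℕ, ∀ h : k < m + 1,
            π (.vRight (⟨k, h⟩ : Fin (m+1))) = a ∧
            ((π (.vLeft (⟨k, h⟩ : Fin (m+1))) : ℕ) = 2 - (a:ℕ)) := by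
        intro a ha0' ha2 k
        induction k with
        | zero =>
          intro h
          refine ⟨ha0', ?_⟩
          have := hedge ⟨0, h⟩
          rw [ha0'] at this
          omega
        | succ k ih =>
          intro h
          have hk : k < m := by omega
          obtain ⟨ihR, ihL⟩ := ih (by omega)
          obtain ⟨h1, h2, h3⟩ := hv ⟨k, hk⟩
          have hcs : (Fin.castSucc (⟨k, hk⟩ : Fin m)) = (⟨k, by omega⟩ : Fin (m+1)) := rfl
          have hsc : (Fin.succ (⟨k, hk⟩ : Fin m)) = (⟨k+1, h⟩ : Fin (m+1)) := rfl
          rw [hcs, ihR] at h1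
          rw [hsc] at h1 h3
          have hL2 : (π (.vLeft (⟨k+1, h⟩ : Fin (m+1))) : ℕ) = 2 - (a:ℕ) := by
            rcases fin3cases (π (.vLeft (⟨k+1, h⟩ : Fin (m+1)))) with hx | hx | hx <;>
              rcases fin3cases a with hy | hy | hy <;>
              simp_all [(fin3val _).1, (fin3val _).2.1, (fin3val _).2.2, -Fin.val_eq_zero_iff] <;> omega
          refine ⟨Fin.ext ?_, hL2⟩
          have hE := hedge ⟨k+1, h⟩
          rcases ha2 with hy | hy <;> omega
      rcases fin3cases (π (.vRight (⟨0, Nat.succ_pos m⟩ : Fin (m+1)))) with h0 | h0 | h0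
      · -- vRight ≡ 0, vLeft ≡ 2 : rho20
        left
        have c := claim 0 h0 (Or.inl rfl)
        funext f
        cases f with
        | vLeft k =>
          have := (c k.1 k.2).2
          show _ = (2 : Fin 3)
          rcases fin3cases (π (.vLeft k)) with hx | hx | hx <;>
            simp_all [(fin3val _).1, (fin3val _).2.1, (fin3val _).2.2, -Fin.val_eq_zero_iff]
        | vRight k => exact (c k.1 k.2).1
        | vFoot k => exact hfoot k
        | wFoot k => exact hf k
      · exact absurd h0 ha0
      · -- vRight ≡ 2, vLeft ≡ 0 : rho02
        right
        have c := claim 2 h0 (Or.inr rfl)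
        funext f
        cases f with
        | vLeft k =>
          have := (c k.1 k.2).2
          show _ = (0 : Fin 3)
          rcases fin3cases (π (.vLeft k)) with hx | hx | hx <;>
            simp_all [(fin3val _).1, (fin3val _).2.1, (fin3val _).2.2, -Fin.val_eq_zero_iff]
        | vRight k => exact (c k.1 k.2).1
        | vFoot k => exact hfoot k
        | wFoot k => exact hf k
    · rintro (rfl | rfl)
      · refine ⟨?_, fun k => rfl, ?_⟩
        · intro k
          exact ⟨(by decide : (0:Fin 3) ≠ 2), (by decide : (0:Fin 3) ≠ 1),
            (by decide : (2:Fin 3) ≠ 1)⟩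
        · funext e
          cases e with
          | e k => rfl
          | f k => rfl
      · refine ⟨?_, fun k => rfl, ?_⟩
        · intro k
          exact ⟨(by decide : (2:Fin 3) ≠ 0), (by decide : (2:Fin 3) ≠ 1),
            (by decide : (0:Fin 3) ≠ 1)⟩
        · funext e
          cases e with
          | e k => rfl
          | f k => rfl
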